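/- arXiv:2001.06032 — 3 statements merged into one kernel-verified Lean document; each statement's English description precedes it below -/
import Mathlib

section
/- Let $\mathsf{d}\geq 2$ be an integer, let $\widehat{a}(\xi)$ be an $r\times r$ matrix of $2\pi$-periodic trigonometric polynomials, and let $\widehat{\phi}(\xi)$ be an $r\times 1$ vector of entire functions (Fourier transforms of compactly supported distributions) satisfying $\widehat{\phi}(\mathsf{d}\xi)=\widehat{a}(\xi)\widehat{\phi}(\xi)$. Suppose $\widehat{\upsilon}$ is a $1\times r$ vector of trigonometric polynomials with $\widehat{\upsilon}(0)\widehat{\phi}(0)=1$ and $\widehat{\upsilon}(\mathsf{d}\xi)\widehat{a}(\xi)=\widehat{\upsilon}(\xi)+O(|\xi|^m)$ as $\xi\to 0$. Then $\widehat{\upsilon}(\xi)\widehat{\phi}(\xi)=1+O(|\xi|^m)$ as $\xi\to 0$. -/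
/-- The symbol of a finitely supported scalar sequence (trigonometric polynomial). -/
noncomputable def trigSym (c : ℤ →₀ ℂ) (ξ : ℝ) : ℂ :=
  c.sum fun k a => a * Complex.exp (-Complex.I * (k : ℂ) * (ξ : ℂ))

/-- The symbol of a finitely supported matrix-valued sequence. -/
noncomputable def trigSymM {α β : Type*} (U : ℤ →₀ Matrix α β ℂ) (ξ : ℝ) : Matrix α β ℂ :=
  U.sum fun k A => Complex.exp (-Complex.I * (k : ℂ) * (ξ : ℂ)) • A

/-- `f(ξ) = g(ξ) + O(|ξ|^m)` as `ξ → 0`: derivatives at `0` agree up to order `m-1`. -/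
def derivsMatch (m : ℕ) (f g : ℝ → ℂ) : Prop :=
  ∀ j < m, iteratedDeriv j f 0 = iteratedDeriv j g 0

open Finset
open scoped ContDiff

lemma aux_one_le_infty : (1 : WithTop ℕ∞) ≤ ∞ := by exact_mod_cast le_top (α := ℕ∞)

lemma contDiff_cexp_line (c : ℂ) : ContDiff ℝ ∞ (fun ξ : ℝ => Complex.exp (c * (ξ : ℂ))) := by
  have h1 : ContDiff ℝ ∞ (fun ξ : ℝ => c * (ξ : ℂ)) :=
    contDiff_const.mul Complex.ofRealCLM.contDiff
  exact ((Complex.contDiff_exp (𝕜 := ℂ)).restrict_scalars ℝ).comp h1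

lemma contDiff_trigSym (c : ℤ →₀ ℂ) : ContDiff ℝ ∞ (trigSym c) := by
  unfold trigSym Finsupp.sum
  exact ContDiff.sum fun k _ => contDiff_const.mul (contDiff_cexp_line _)

lemma trigSymM_apply_eq {α β : Type*} (U : ℤ →₀ Matrix α β ℂ) (ξ : ℝ) (i : α) (j : β) :
    trigSymM U ξ i j = ∑ k ∈ U.support, Complex.exp (-Complex.I * (k : ℂ) * (ξ : ℂ)) * U k i j := by
  simp [trigSymM, Finsupp.sum, Matrix.sum_apply, Matrix.smul_apply, smul_eq_mul]

lemma contDiff_trigSymM {α β : Type*} (U : ℤ →₀ Matrix α β ℂ) (i : α) (j : β) :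
    ContDiff ℝ ∞ (fun ξ => trigSymM U ξ i j) := by
  simp only [trigSymM_apply_eq]
  exact ContDiff.sum fun k _ => (contDiff_cexp_line _).mul contDiff_const

lemma iteratedDeriv_sum' {ι : Type*} (s : Finset ι) (F : ι → ℝ → ℂ)
    (h : ∀ i ∈ s, ContDiff ℝ ∞ (F i)) (n : ℕ) (x : ℝ) :
    iteratedDeriv n (fun y => ∑ i ∈ s, F i y) x = ∑ i ∈ s, iteratedDeriv n (F i) x := by
  simp only [iteratedDeriv_eq_iteratedFDeriv]
  have := iteratedFDeriv_sum (𝕜 := ℝ) (f := F) (u := s) (i := n)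
    (fun i hi => (h i hi).of_le (by exact_mod_cast le_top (α := ℕ∞)))
  have hx := congrFun this x
  simp only [Finset.sum_apply] at hx
  rw [hx]
  simp [ContinuousMultilinearMap.sum_apply]

lemma iteratedDeriv_add' (n : ℕ) (f g : ℝ → ℂ) (hf : ContDiff ℝ ∞ f) (hg : ContDiff ℝ ∞ g)
    (x : ℝ) : iteratedDeriv n (fun y => f y + g y) x
      = iteratedDeriv n f x + iteratedDeriv n g x := by
  simp only [iteratedDeriv_eq_iteratedFDeriv]
  have hfg : (fun y => f y + g y) = f + g := rfl
  rw [hfg, iteratedFDeriv_add_apply (hf.of_le (by exact_mod_cast le_top (α := ℕ∞))).contDiffAt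
    (hg.of_le (by exact_mod_cast le_top (α := ℕ∞))).contDiffAt]
  simp

/-- If `f` and `g` have the same derivatives at `0` up to order `n`, then `f*w` and `g*w`
have the same `n`-th derivative at `0`, for smooth `w`. -/
lemma iteratedDeriv_mul_congr (n : ℕ) :
    ∀ f g w : ℝ → ℂ, ContDiff ℝ ∞ f → ContDiff ℝ ∞ g → ContDiff ℝ ∞ w →
    (∀ j ≤ n, iteratedDeriv j f 0 = iteratedDeriv j g 0) →
    iteratedDeriv n (fun x => f x * w x) 0 = iteratedDeriv n (fun x => g x * w x) 0 := by
  induction n with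
  | zero =>
    intro f g w _ _ _ h
    simp only [iteratedDeriv_zero]
    have := h 0 le_rfl
    simp only [iteratedDeriv_zero] at this
    rw [this]
  | succ n ih =>
    intro f g w hf hg hw h
    have hf' : ContDiff ℝ ∞ (deriv f) := (contDiff_infty_iff_deriv.mp hf).2
    have hg' : ContDiff ℝ ∞ (deriv g) := (contDiff_infty_iff_deriv.mp hg).2
    have hw' : ContDiff ℝ ∞ (deriv w) := (contDiff_infty_iff_deriv.mp hw).2
    have key : ∀ u v : ℝ → ℂ, ContDiff ℝ ∞ u → ContDiff ℝ ∞ v →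
        deriv (fun x => u x * v x) = fun x => deriv u x * v x + u x * deriv v x := by
      intro u v hu hv
      funext x
      exact deriv_fun_mul ((hu.differentiable (by simp)).differentiableAt)
        ((hv.differentiable (by simp)).differentiableAt)
    rw [iteratedDeriv_succ', key f w hf hw, iteratedDeriv_succ', key g w hg hw,
      iteratedDeriv_add' n _ _ (hf'.mul hw) (hf.mul hw'),
      iteratedDeriv_add' n _ _ (hg'.mul hw) (hg.mul hw')]
    congr 1
    · refine ih (deriv f) (deriv g) w hf' hg' hw fun j hj => ?_
      have := h (j + 1) (by omega)
      rwa [iteratedDeriv_succ', iteratedDeriv_succ'] at this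
    · exact ih f g (deriv w) hf hg hw' fun j hj => h j (by omega)

lemma iteratedDeriv_one_fun (n : ℕ) (x : ℝ) :
    iteratedDeriv n (fun _ : ℝ => (1 : ℂ)) x = if n = 0 then 1 else 0 := by
  have h0 : ∀ k (y : ℝ), iteratedDeriv k (fun _ : ℝ => (0 : ℂ)) y = 0 := by
    intro k
    induction k with
    | zero => intro y; simp
    | succ k ihk =>
      intro y
      rw [iteratedDeriv_succ']
      have : deriv (fun _ : ℝ => (0 : ℂ)) = fun _ : ℝ => (0 : ℂ) := by
        funext z; exact deriv_const z 0
      rw [this]; exact ihk y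
  cases n with
  | zero => simp
  | succ n =>
    rw [iteratedDeriv_succ']
    have : deriv (fun _ : ℝ => (1 : ℂ)) = fun _ : ℝ => (0 : ℂ) := by
      funext y; exact deriv_const y 1
    rw [this]
    simp [h0]

/-- Lemma 2.2: if `φ̂` (smooth, the Fourier transform of a compactly supported distribution
vector) satisfies the refinement equation `φ̂(dξ) = â(ξ)φ̂(ξ)`, and `υ̂` is a matching filter
with `υ̂(0)φ̂(0) = 1` and `υ̂(dξ)â(ξ) = υ̂(ξ) + O(|ξ|^m)`, then
`υ̂(ξ)φ̂(ξ) = 1 + O(|ξ|^m)` as `ξ → 0`. -/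
theorem matching_filter_normalization (d : ℕ) (hd : 2 ≤ d) (r : ℕ)
    (a : ℤ →₀ Matrix (Fin r) (Fin r) ℂ)
    (φ : Fin r → ℝ → ℂ) (hφ : ∀ i, ContDiff ℝ ⊤ (φ i))
    (href : ∀ ξ : ℝ, ∀ i, φ i ((d : ℝ) * ξ) = ∑ j, trigSymM a ξ i j * φ j ξ)
    (υ : Fin r → ℤ →₀ ℂ) (m : ℕ)
    (hnorm : ∑ i, trigSym (υ i) 0 * φ i 0 = 1)
    (hsr : ∀ j : Fin r, derivsMatch m
      (fun ξ => ∑ i, trigSym (υ i) ((d : ℝ) * ξ) * trigSymM a ξ i j)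
      (fun ξ => trigSym (υ j) ξ)) :
    derivsMatch m (fun ξ => ∑ i, trigSym (υ i) ξ * φ i ξ) (fun _ => 1) := by
  have hφ' : ∀ i, ContDiff ℝ ∞ (φ i) := fun i => (hφ i).of_le le_top
  set h : ℝ → ℂ := fun ξ => ∑ i, trigSym (υ i) ξ * φ i ξ with hh
  set G : Fin r → ℝ → ℂ :=
    fun j ξ => ∑ i, trigSym (υ i) ((d : ℝ) * ξ) * trigSymM a ξ i j with hG
  have hsymd : ∀ i : Fin r, ContDiff ℝ ∞ (fun ξ : ℝ => trigSym (υ i) ((d : ℝ) * ξ)) :=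
    fun i => (contDiff_trigSym (υ i)).comp (contDiff_const.mul contDiff_id)
  have hGc : ∀ j, ContDiff ℝ ∞ (G j) :=
    fun j => ContDiff.sum fun i _ => (hsymd i).mul (contDiff_trigSymM a i j)
  have hhc : ContDiff ℝ ∞ h :=
    ContDiff.sum fun i _ => (contDiff_trigSym (υ i)).mul (hφ' i)
  have hstep : ∀ ξ : ℝ, h ((d : ℝ) * ξ) = ∑ j, G j ξ * φ j ξ := by
    intro ξ
    simp only [hh, hG, href ξ, Finset.mul_sum, Finset.sum_mul]
    rw [Finset.sum_comm]
    exact Finset.sum_congr rfl fun j _ => Finset.sum_congr rfl fun i _ => by ring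
  intro j hj
  rw [iteratedDeriv_one_fun]
  rcases Nat.eq_zero_or_pos j with rfl | hj1
  · simpa [hh] using hnorm
  · rw [if_neg (by omega)]
    have e1 : iteratedDeriv j (fun ξ => h ((d : ℝ) * ξ)) 0
        = ((d : ℝ) ^ j : ℝ) • iteratedDeriv j h 0 := by
      have := congrFun (iteratedDeriv_comp_const_smul (n := j)
        (hhc.of_le (by exact_mod_cast le_top (α := ℕ∞))) (d : ℝ)) 0
      simpa using this
    have e2 : iteratedDeriv j (fun ξ => h ((d : ℝ) * ξ)) 0 = iteratedDeriv j h 0 := by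
      have hfun : (fun ξ => h ((d : ℝ) * ξ)) = fun ξ => ∑ i, G i ξ * φ i ξ := by
        funext ξ; exact hstep ξ
      rw [hfun,
        iteratedDeriv_sum' Finset.univ (fun i ξ => G i ξ * φ i ξ)
          (fun i _ => (hGc i).mul (hφ' i)) j 0]
      have heach : ∀ i : Fin r, iteratedDeriv j (fun ξ => G i ξ * φ i ξ) 0
          = iteratedDeriv j (fun ξ => trigSym (υ i) ξ * φ i ξ) 0 := by
        intro i
        exact iteratedDeriv_mul_congr j (G i) (trigSym (υ i)) (φ i) (hGc i)
          (contDiff_trigSym (υ i)) (hφ' i) fun k hk => hsr i k (by omega)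
      rw [Finset.sum_congr rfl fun i _ => heach i, hh,
        ← iteratedDeriv_sum' Finset.univ (fun i ξ => trigSym (υ i) ξ * φ i ξ)
          (fun i _ => (contDiff_trigSym (υ i)).mul (hφ' i)) j 0]
    have e3 : (((d : ℝ) ^ j : ℝ) : ℂ) * iteratedDeriv j h 0 = iteratedDeriv j h 0 := by
      have := e1.symm.trans e2
      rwa [Complex.real_smul] at this
    have hne : (((d : ℝ) ^ j : ℝ) : ℂ) ≠ 1 := by
      rw [ne_eq, ← Complex.ofReal_one, Complex.ofReal_inj]
      have h2 : (2 : ℝ) ≤ (d : ℝ) ^ j := by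
        calc (2 : ℝ) ≤ (d : ℝ) := by exact_mod_cast hd
        _ ≤ (d : ℝ) ^ j := le_self_pow₀ (by exact_mod_cast le_trans one_le_two hd) (by omega)
      linarith
    have hz : ((((d : ℝ) ^ j : ℝ) : ℂ) - 1) * iteratedDeriv j h 0 = 0 := by
      rw [sub_mul, one_mul, e3, sub_self]
    rcases mul_eq_zero.mp hz with h0 | h0
    · exact absurd (by linear_combination h0) hne
    · exact h0
end

section
/- Let $m\in\mathbb{N}$, and let $\widehat{v}$ be a $1\times r$ row vector and $\widehat{u}$ an $r\times 1$ column vector, both with entries smooth near the origin, such that $\widehat{v}(\xi)\widehat{u}(\xi)=1+O(|\xi|^m)$ as $\xi\to 0$. Then for any $n\in\mathbb{N}$ there exists a $1\times r$ row vector $\widehat{\mathring{v}}$ with entries smooth near the origin such that $\widehat{\mathring{v}}(\xi)=\widehat{v}(\xi)+O(|\xi|^m)$ and $\widehat{\mathring{v}}(\xi)\widehat{u}(\xi)=1+O(|\xi|^n)$ as $\xi\to 0$. -/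
open Filter Topology

private lemma myIterWithin_eq {n : ℕ} {s : Set ℝ} (hs : IsOpen s) {x : ℝ} (hx : x ∈ s)
    (f : ℝ → ℂ) : iteratedDerivWithin n f s x = iteratedDeriv n f x := by
  simp only [iteratedDerivWithin, iteratedDeriv, iteratedFDerivWithin_of_isOpen n hs hx]

private lemma myIter_add {j N : ℕ} {s : Set ℝ} (hs : IsOpen s) (h0 : (0:ℝ) ∈ s) (hjN : j ≤ N)
    {a b : ℝ → ℂ} (ha : ContDiffOn ℝ N a s) (hb : ContDiffOn ℝ N b s) :
    iteratedDeriv j (fun y => a y + b y) 0 = iteratedDeriv j a 0 + iteratedDeriv j b 0 := by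
  rw [← myIterWithin_eq hs h0, ← myIterWithin_eq hs h0 a, ← myIterWithin_eq hs h0 b]
  exact iteratedDerivWithin_add h0 hs.uniqueDiffOn ((ha 0 h0).of_le (by exact_mod_cast hjN)) ((hb 0 h0).of_le (by exact_mod_cast hjN))

private lemma myIter_sub {j N : ℕ} {s : Set ℝ} (hs : IsOpen s) (h0 : (0:ℝ) ∈ s) (hjN : j ≤ N)
    {a b : ℝ → ℂ} (ha : ContDiffOn ℝ N a s) (hb : ContDiffOn ℝ N b s) :
    iteratedDeriv j (fun y => a y - b y) 0 = iteratedDeriv j a 0 - iteratedDeriv j b 0 := by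
  rw [← myIterWithin_eq hs h0, ← myIterWithin_eq hs h0 a, ← myIterWithin_eq hs h0 b]
  exact iteratedDerivWithin_sub h0 hs.uniqueDiffOn ((ha 0 h0).of_le (by exact_mod_cast hjN)) ((hb 0 h0).of_le (by exact_mod_cast hjN))

/-- If all derivatives of `h` up to order `j` vanish at `0`, so does the `j`-th derivative
of `h * g`, for `h`, `g` smooth on an open neighborhood of `0`. -/
private lemma vanish_mul {s : Set ℝ} (hs : IsOpen s) (h0 : (0:ℝ) ∈ s) :
    ∀ (j : ℕ) (h g : ℝ → ℂ), ContDiffOn ℝ j h s → ContDiffOn ℝ j g s →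
      (∀ k ≤ j, iteratedDeriv k h 0 = 0) →
      iteratedDeriv j (fun y => h y * g y) 0 = 0 := by
  intro j
  induction j with
  | zero =>
    intro h g _ _ hk
    have := hk 0 le_rfl
    rw [iteratedDeriv_zero] at this
    simp only [iteratedDeriv_zero]
    rw [this, zero_mul]
  | succ j IH =>
    intro h g hh hg hk
    have hdiff : ∀ (F : ℝ → ℂ), ContDiffOn ℝ ((j + 1 : ℕ) : WithTop ℕ∞) F s → ∀ y ∈ s, DifferentiableAt ℝ F y := by
      intro F hF y hy
      exact (hF.contDiffAt (hs.mem_nhds hy)).differentiableAt (by exact_mod_cast Nat.succ_ne_zero j)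
    have hev : deriv (fun y => h y * g y) =ᶠ[𝓝 (0:ℝ)]
        fun y => deriv h y * g y + h y * deriv g y := by
      filter_upwards [hs.mem_nhds h0] with y hy
      exact deriv_mul (hdiff h hh y hy) (hdiff g hg y hy)
    have hh' : ContDiffOn ℝ j (deriv h) s := hh.deriv_of_isOpen hs (by push_cast; exact le_rfl)
    have hg' : ContDiffOn ℝ j (deriv g) s := hg.deriv_of_isOpen hs (by push_cast; exact le_rfl)
    have hjj : ((j : ℕ) : WithTop ℕ∞) ≤ ((j + 1 : ℕ) : WithTop ℕ∞) := by exact_mod_cast Nat.le_succ j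
    rw [iteratedDeriv_succ', hev.iteratedDeriv_eq j,
      myIter_add hs h0 le_rfl (hh'.mul (hg.of_le hjj)) ((hh.of_le hjj).mul hg')]
    have e1 : iteratedDeriv j (fun y => deriv h y * g y) 0 = 0 := by
      refine IH (deriv h) g hh' (hg.of_le hjj) fun k hk' => ?_
      rw [← iteratedDeriv_succ']
      exact hk (k + 1) (by omega)
    have e2 : iteratedDeriv j (fun y => h y * deriv g y) 0 = 0 :=
      IH h (deriv g) (hh.of_le hjj) hg' fun k hk' => hk k (by omega)
    rw [e1, e2, add_zero]

private lemma exists_open_contDiffOn (N : ℕ) {g : ℝ → ℂ} (hg : ContDiffAt ℝ (⊤ : ℕ∞) g 0) :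
    ∃ s : Set ℝ, IsOpen s ∧ (0:ℝ) ∈ s ∧ ContDiffOn ℝ N g s := by
  obtain ⟨t, ht, htC⟩ := hg.contDiffOn (m := N) (by exact_mod_cast le_top) (by simp)
  obtain ⟨s, hst, hso, h0⟩ := mem_nhds_iff.mp ht
  exact ⟨s, hso, h0, htC.mono hst⟩

/-- Lemma 2.3: if `v̂` is a `1 × r` row vector and `û` an `r × 1` column vector, both with
entries smooth near the origin, such that `v̂(ξ)û(ξ) = 1 + O(|ξ|^m)`, then for any `n ≥ 1`
there is a row vector `v̊̂` with entries smooth near the origin such that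
`v̊̂(ξ) = v̂(ξ) + O(|ξ|^m)` and `v̊̂(ξ)û(ξ) = 1 + O(|ξ|^n)` as `ξ → 0`. -/
theorem improve_moment_match (r m : ℕ) (hm : 1 ≤ m) (v u : Fin r → ℝ → ℂ)
    (hv : ∀ i, ContDiffAt ℝ (⊤ : ℕ∞) (v i) 0) (hu : ∀ i, ContDiffAt ℝ (⊤ : ℕ∞) (u i) 0)
    (h1 : derivsMatch m (fun ξ => ∑ i, v i ξ * u i ξ) (fun _ => 1))
    (n : ℕ) (hn : 1 ≤ n) :
    ∃ w : Fin r → ℝ → ℂ, (∀ i, ContDiffAt ℝ (⊤ : ℕ∞) (w i) 0) ∧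
      (∀ i, derivsMatch m (w i) (v i)) ∧
      derivsMatch n (fun ξ => ∑ i, w i ξ * u i ξ) (fun _ => 1) := by
  set f : ℝ → ℂ := fun ξ => ∑ i, v i ξ * u i ξ with hfdef
  have hfC : ContDiffAt ℝ (⊤ : ℕ∞) f 0 := ContDiffAt.sum (fun i _ => (hv i).mul (hu i))
  have hf0 : f 0 = 1 := by
    have := h1 0 hm
    simpa [iteratedDeriv_zero] using this
  -- open sets on which everything is smooth and f ≠ 0
  obtain ⟨sf, hsfo, hsf0, hsfC⟩ := exists_open_contDiffOn (m + n) hfC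
  choose sv hsvo hsv0 hsvC using fun i => exists_open_contDiffOn (m + n) (hv i)
  have hne : {y : ℝ | f y ≠ 0} ∈ 𝓝 (0:ℝ) :=
    hfC.continuousAt.eventually_ne (by simp [hf0])
  obtain ⟨s0, hs0sub, hs0o, hs00⟩ := mem_nhds_iff.mp hne
  set S : Set ℝ := sf ∩ s0 ∩ ⋂ i, sv i with hSdef
  have hSo : IsOpen S := (hsfo.inter hs0o).inter (isOpen_iInter_of_finite hsvo)
  have hS0 : (0:ℝ) ∈ S := ⟨⟨hsf0, hs00⟩, Set.mem_iInter.mpr hsv0⟩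
  have hSne : ∀ y ∈ S, f y ≠ 0 := fun y hy => hs0sub hy.1.2
  have hfS : ContDiffOn ℝ ((m + n : ℕ) : WithTop ℕ∞) f S := hsfC.mono fun y hy => hy.1.1
  have hfinvS : ContDiffOn ℝ ((m + n : ℕ) : WithTop ℕ∞) (fun y => (f y)⁻¹) S := hfS.inv hSne
  have hvS : ∀ i, ContDiffOn ℝ ((m + n : ℕ) : WithTop ℕ∞) (v i) S :=
    fun i => (hsvC i).mono fun y hy => Set.mem_iInter.mp hy.2 i
  -- the vanishing of derivatives of 1 - f
  have hvanish : ∀ k < m, iteratedDeriv k (fun y => (1:ℂ) - f y) 0 = 0 := by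
    intro k hk
    rw [myIter_sub hSo hS0 (by omega : k ≤ m + n) contDiffOn_const hfS, ← h1 k hk, sub_self]
  refine ⟨fun i ξ => v i ξ * (f ξ)⁻¹, fun i => (hv i).mul (hfC.inv (by simp [hf0])),
    fun i j hj => ?_, fun j hj => ?_⟩
  · -- derivsMatch m (w i) (v i)
    have key : (fun ξ => v i ξ * (f ξ)⁻¹) =ᶠ[𝓝 (0:ℝ)]
        fun y => v i y + (1 - f y) * (v i y * (f y)⁻¹) := by
      filter_upwards [hSo.mem_nhds hS0] with y hy
      have hfy := hSne y hy
      field_simp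
      ring
    have hjN : ((j : ℕ) : WithTop ℕ∞) ≤ ((m + n : ℕ) : WithTop ℕ∞) := by
      exact_mod_cast (by omega : j ≤ m + n)
    rw [key.iteratedDeriv_eq j,
      myIter_add hSo hS0 (by omega : j ≤ m + n) (hvS i) ((contDiffOn_const.sub hfS).mul ((hvS i).mul hfinvS)),
      vanish_mul hSo hS0 j _ _ ((contDiffOn_const.sub hfS).of_le hjN) (((hvS i).mul hfinvS).of_le hjN)
        (fun k hk => hvanish k (lt_of_le_of_lt hk hj)), add_zero]
  · -- derivsMatch n for the new row vector
    have key : (fun ξ => ∑ i, v i ξ * (f ξ)⁻¹ * u i ξ) =ᶠ[𝓝 (0:ℝ)] (fun _ => (1:ℂ)) := by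
      filter_upwards [hSo.mem_nhds hS0] with y hy
      have hfy := hSne y hy
      have : (∑ i, v i y * (f y)⁻¹ * u i y) = (∑ i, v i y * u i y) * (f y)⁻¹ := by
        rw [Finset.sum_mul]
        exact Finset.sum_congr rfl fun i _ => by ring
      rw [this]
      exact mul_inv_cancel₀ hfy
    rw [key.iteratedDeriv_eq j]
end

section
/- Let $r\geq 2$, $s\in\mathbb{N}$, $m\in\mathbb{N}$, and $b\in(l_0(\mathbb{Z}))^{s\times r}$. Let $\widehat{\Upsilon}(\xi)=[1,e^{i\xi/r},\ldots,e^{i(r-1)\xi/r}]$. Then $\widehat{\Upsilon}(\xi)\overline{\widehat{b}(\xi)}^{\mathsf{T}}=O(|\xi|^m)$ as $\xi\to 0$ if and only if there exists $q\in(l_0(\mathbb{Z}))^{s\times 1}$ such that $\widehat{b}(\xi)=[\widehat{q^{[0;r]}}(\xi),\widehat{q^{[1;r]}}(\xi),\ldots,\widehat{q^{[r-1;r]}}(\xi)]\,E_{\nabla^m\delta;r}(\xi)$ for all $\xi\in\mathbb{R}$. -/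
/-- The scalar coset symbol `v̂^{[γ;d]}(ξ) = ∑ₖ v(γ + dk) e^{-ikξ}`. -/
noncomputable def cosetSym (v : ℤ →₀ ℂ) (γ d : ℤ) (ξ : ℝ) : ℂ :=
  ∑ j ∈ v.support, if d ∣ (j - γ) then
    v j * Complex.exp (-Complex.I * (((j - γ) / d : ℤ) : ℂ) * (ξ : ℂ)) else 0

/-- The filter `∇^m δ`, with symbol `(1 - e^{-iξ})^m`. -/
noncomputable def nablaDelta (m : ℕ) : ℤ →₀ ℂ :=
  ∑ k ∈ Finset.range (m + 1), Finsupp.single (k : ℤ) ((-1 : ℂ) ^ k * (m.choose k))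

open Complex Polynomial Finset

noncomputable section

namespace BVM

/-- moment functional against a polynomial -/
def pmom (p : ℂ[X]) : (ℤ →₀ ℂ) →ₗ[ℂ] ℂ :=
  Finsupp.linearCombination ℂ (fun n : ℤ => p.eval (n : ℂ))

lemma pmom_single (p : ℂ[X]) (n : ℤ) (a : ℂ) :
    pmom p (Finsupp.single n a) = a * p.eval (n : ℂ) := by
  rw [pmom, Finsupp.linearCombination_single, smul_eq_mul]

lemma pmom_apply (p : ℂ[X]) (c : ℤ →₀ ℂ) :
    pmom p c = ∑ n ∈ c.support, c n * p.eval (n : ℂ) := by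
  rw [pmom, Finsupp.linearCombination_apply, Finsupp.sum]
  exact Finset.sum_congr rfl fun n _ => rfl

lemma pmom_zero_p (c : ℤ →₀ ℂ) : pmom 0 c = 0 := by
  simp only [pmom_apply, eval_zero, mul_zero, Finset.sum_const_zero]

lemma pmom_sub_p (p q : ℂ[X]) (c : ℤ →₀ ℂ) :
    pmom (p - q) c = pmom p c - pmom q c := by
  simp only [pmom_apply, eval_sub, mul_sub, Finset.sum_sub_distrib]

lemma pmom_mul (p : ℂ[X]) (u v : AddMonoidAlgebra ℂ ℤ) :
    pmom p (u * v).coeff = u.coeff.sum fun a ca => ca * pmom (p.comp (X + C (a : ℂ))) v.coeff := by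
  rw [AddMonoidAlgebra.mul_def, AddMonoidAlgebra.coeff_finsuppSum, map_finsuppSum (pmom p)]
  refine Finsupp.sum_congr fun a _ => ?_
  rw [AddMonoidAlgebra.coeff_finsuppSum, map_finsuppSum (pmom p), Finsupp.sum, pmom_apply, Finset.mul_sum]
  refine Finset.sum_congr rfl fun b hb => ?_
  rw [AddMonoidAlgebra.coeff_single,
    pmom_single, eval_comp, eval_add, eval_X, eval_C]
  push_cast
  ring

lemma pmom_single_mul (p : ℂ[X]) (a : ℤ) (c : ℂ) (v : AddMonoidAlgebra ℂ ℤ) :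
    pmom p (AddMonoidAlgebra.single a c * v).coeff = c * pmom (p.comp (X + C (a : ℂ))) v.coeff := by
  rw [pmom_mul, AddMonoidAlgebra.coeff_single]
  exact Finsupp.sum_single_index (by rw [zero_mul])

/-- the difference filter 1 - z -/
def Dz : AddMonoidAlgebra ℂ ℤ := 1 - AddMonoidAlgebra.single 1 1

lemma natDegree_comp_X_add_C (p : ℂ[X]) (t : ℂ) :
    (p.comp (X + C t)).natDegree = p.natDegree := by
  rw [natDegree_comp, natDegree_X_add_C, mul_one]

lemma pmom_D_pow (m : ℕ) : ∀ p : ℂ[X], p.natDegree < m → pmom p (Dz ^ m).coeff = 0 := by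
  induction m with
  | zero => exact fun p hp => absurd hp (Nat.not_lt_zero _)
  | succ m ih =>
    intro p hp
    have hstep : pmom p (Dz ^ (m + 1)).coeff = pmom (p - p.comp (X + C 1)) (Dz ^ m).coeff := by
      rw [pow_succ', Dz, sub_mul, one_mul, AddMonoidAlgebra.coeff_sub, map_sub, pmom_single_mul, one_mul,
        Int.cast_one, pmom_sub_p]
    rw [hstep]
    set p' := p - p.comp (X + C 1) with hp'
    by_cases h0 : p' = 0
    · rw [h0, pmom_zero_p]
    · have hpne : p ≠ 0 := by
        intro h
        apply h0
        rw [hp', h, zero_comp, sub_zero]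
      have hlc : p.leadingCoeff = (p.comp (X + C 1)).leadingCoeff := by
        rw [leadingCoeff_comp (by rw [natDegree_X_add_C]; norm_num), leadingCoeff_X_add_C,
          one_pow, mul_one]
      have hcompne : p.comp (X + C 1) ≠ 0 := fun h => by
        rw [h, leadingCoeff_zero] at hlc
        exact hpne (leadingCoeff_eq_zero.mp hlc)
      have hdeg : p.degree = (p.comp (X + C 1)).degree := by
        rw [degree_eq_natDegree hpne, degree_eq_natDegree hcompne, natDegree_comp_X_add_C]
      have hlt : p'.degree < p.degree := degree_sub_lt hdeg hpne hlc
      have hlt' : p'.natDegree < p.natDegree := natDegree_lt_natDegree h0 hlt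
      exact ih p' (by omega)

lemma nablaDelta_eq_aux (m : ℕ) :
    (∑ k ∈ Finset.range (m + 1),
      AddMonoidAlgebra.single (k : ℤ) ((-1 : ℂ) ^ k * (m.choose k)) : AddMonoidAlgebra ℂ ℤ)
      = Dz ^ m := by
  induction m with
  | zero =>
    rw [pow_zero, Finset.range_one, Finset.sum_singleton]
    norm_num
  | succ m ih =>
    rw [pow_succ, ← ih, Dz, mul_sub, mul_one, Finset.sum_mul]
    have hz : ∀ k : ℕ, (AddMonoidAlgebra.single (k:ℤ) ((-1:ℂ)^k * (m.choose k)) *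
        AddMonoidAlgebra.single 1 1 : AddMonoidAlgebra ℂ ℤ)
        = AddMonoidAlgebra.single ((k:ℤ)+1) ((-1:ℂ)^k * (m.choose k)) := by
      intro k
      rw [AddMonoidAlgebra.single_mul_single, mul_one]
    simp only [hz]
    -- LHS target: ∑_{k ∈ range (m+2)} single k ((-1)^k * choose (m+1) k)
    rw [Finset.sum_range_succ' (fun k => (AddMonoidAlgebra.single (k : ℤ)
      ((-1 : ℂ) ^ k * ((m+1).choose k)) : AddMonoidAlgebra ℂ ℤ)) (m+1)]
    have hsplit : ∀ k : ℕ, (AddMonoidAlgebra.single ((k+1 : ℕ) : ℤ)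
        ((-1 : ℂ) ^ (k+1) * ((m+1).choose (k+1))) : AddMonoidAlgebra ℂ ℤ)
        = AddMonoidAlgebra.single ((k:ℤ)+1) ((-1:ℂ)^(k+1) * (m.choose (k+1)))
          - AddMonoidAlgebra.single ((k:ℤ)+1) ((-1:ℂ)^k * (m.choose k)) := by
      intro k
      have hk : ((k+1:ℕ):ℤ) = (k:ℤ)+1 := by push_cast; ring
      rw [hk, ← AddMonoidAlgebra.single_sub]
      congr 1
      rw [Nat.choose_succ_succ m k]
      push_cast
      ring
    simp only [hsplit]
    rw [Finset.sum_sub_distrib]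
    have hlast : ∑ k ∈ Finset.range (m+1),
        (AddMonoidAlgebra.single ((k:ℤ)+1) ((-1:ℂ)^(k+1) * (m.choose (k+1))) : AddMonoidAlgebra ℂ ℤ)
        = ∑ k ∈ Finset.range (m+2), AddMonoidAlgebra.single ((k:ℤ))
            ((-1:ℂ)^k * (m.choose k)) - AddMonoidAlgebra.single (0:ℤ) 1 := by
      rw [Finset.sum_range_succ' (fun k => (AddMonoidAlgebra.single (k : ℤ)
        ((-1 : ℂ) ^ k * (m.choose k)) : AddMonoidAlgebra ℂ ℤ)) (m+1)]
      simp only [Nat.cast_zero, pow_zero, Nat.choose_zero_right, Nat.cast_one, mul_one,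
        Nat.cast_add, Nat.cast_one]
      rw [add_sub_cancel_right]
    rw [hlast]
    have hextra : ∑ k ∈ Finset.range (m+2), (AddMonoidAlgebra.single ((k:ℤ))
        ((-1:ℂ)^k * (m.choose k)) : AddMonoidAlgebra ℂ ℤ)
        = ∑ k ∈ Finset.range (m+1), AddMonoidAlgebra.single ((k:ℤ)) ((-1:ℂ)^k * (m.choose k)) := by
      rw [Finset.sum_range_succ, Nat.choose_succ_self, Nat.cast_zero, mul_zero,
        AddMonoidAlgebra.single_zero, add_zero]
    rw [hextra]
    simp only [Nat.cast_zero, pow_zero, Nat.choose_zero_right, Nat.cast_one, mul_one]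
    abel


lemma nablaDelta_eq (m : ℕ) : nablaDelta m = (Dz ^ m).coeff := by
  rw [nablaDelta, ← nablaDelta_eq_aux m, AddMonoidAlgebra.coeff_sum]
  rfl

/-- vanishing monomial moments kill all low-degree polynomial moments -/
lemma pmom_of_mom (m : ℕ) (c : ℤ →₀ ℂ) (h : ∀ j < m, pmom (X ^ j) c = 0)
    (p : ℂ[X]) (hp : p.natDegree < m) : pmom p c = 0 := by
  have hmono : ∀ j < m, ∑ n ∈ c.support, c n * (n : ℂ) ^ j = 0 := by
    intro j hj
    have := h j hj
    rw [pmom_apply] at this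
    simpa only [eval_pow, eval_X] using this
  rw [pmom_apply]
  calc ∑ n ∈ c.support, c n * p.eval (n : ℂ)
      = ∑ n ∈ c.support, ∑ j ∈ Finset.range (p.natDegree + 1),
          c n * (p.coeff j * (n : ℂ) ^ j) := by
        refine Finset.sum_congr rfl fun n _ => ?_
        rw [eval_eq_sum_range, Finset.mul_sum]
    _ = ∑ j ∈ Finset.range (p.natDegree + 1), p.coeff j *
          ∑ n ∈ c.support, c n * (n : ℂ) ^ j := by
        rw [Finset.sum_comm]
        refine Finset.sum_congr rfl fun j _ => ?_
        rw [Finset.mul_sum]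
        refine Finset.sum_congr rfl fun n _ => by ring
    _ = 0 := by
        refine Finset.sum_eq_zero fun j hj => ?_
        rw [Finset.mem_range] at hj
        rw [hmono j (by omega), mul_zero]

lemma exists_div (m : ℕ) (c : ℤ →₀ ℂ) (h : ∀ j < m, pmom (X ^ j) c = 0) :
    ∃ q : AddMonoidAlgebra ℂ ℤ, c = (q * Dz ^ m).coeff := by
  classical
  set N : ℕ := c.support.sup fun n => n.natAbs with hN
  have hsupp : ∀ n ∈ c.support, (0 : ℤ) ≤ n + N := by
    intro n hn
    have h2 : n.natAbs ≤ N := Finset.le_sup (f := fun n : ℤ => n.natAbs) hn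
    omega
  set P : ℂ[X] := c.sum fun n a => C a * X ^ (n + N).toNat with hP
  -- divisibility
  have hdvd : (X - C (1 : ℂ)) ^ m ∣ P := by
    rw [Polynomial.X_sub_C_pow_dvd_iff, Polynomial.X_pow_dvd_iff]
    intro d hd
    have htay : (P.comp (X + C 1)).coeff d = (Polynomial.hasseDeriv d P).eval 1 := by
      rw [← Polynomial.taylor_apply, Polynomial.taylor_coeff]
    rw [htay]
    have hhd : Polynomial.hasseDeriv d P
        = c.sum fun n a => monomial ((n + N).toNat - d) (((n + N).toNat.choose d : ℂ) * a) := by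
      rw [hP, map_finsuppSum]
      refine Finsupp.sum_congr fun n _ => ?_
      rw [C_mul_X_pow_eq_monomial, hasseDeriv_monomial]
    rw [hhd]
    -- eval at 1
    have heval : (c.sum fun n a => monomial ((n + N).toNat - d)
        (((n + N).toNat.choose d : ℂ) * a)).eval 1
        = ∑ n ∈ c.support, c n * ((n + N).toNat.choose d : ℂ) := by
      rw [Finsupp.sum, eval_finset_sum]
      refine Finset.sum_congr rfl fun n _ => ?_
      rw [eval_monomial, one_pow, mul_one, mul_comm]
    rw [heval]
    -- identify with a polynomial moment
    set B : ℂ[X] := ((Nat.factorial d : ℂ))⁻¹ • ((descPochhammer ℂ d).comp (X + C (N : ℂ))) with hB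
    have hBdeg : B.natDegree < m := by
      have h1 : ((descPochhammer ℂ d).comp (X + C (N : ℂ))).natDegree = d := by
        rw [natDegree_comp, natDegree_X_add_C, mul_one, descPochhammer_natDegree]
      have h2 : B.natDegree ≤ d := h1 ▸ natDegree_smul_le _ _
      omega
    have hBeval : ∀ n ∈ c.support, B.eval (n : ℂ) = ((n + N).toNat.choose d : ℂ) := by
      intro n hn
      have hcast : ((n : ℂ) + N) = (((n + N).toNat : ℕ) : ℂ) := by
        have := hsupp n hn
        have h1 : (((n + N).toNat : ℤ) : ℂ) = ((n : ℂ) + N) := by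
          rw [Int.toNat_of_nonneg this]; push_cast; ring
        rw [← h1]; norm_cast
      rw [hB, eval_smul, eval_comp, eval_add, eval_X, eval_C, smul_eq_mul, hcast,
        descPochhammer_eval_eq_descFactorial, Nat.descFactorial_eq_factorial_mul_choose,
        Nat.cast_mul, ← mul_assoc, inv_mul_cancel₀ (by exact_mod_cast Nat.factorial_ne_zero d),
        one_mul]
    have := pmom_of_mom m c h B hBdeg
    rw [pmom_apply] at this
    rw [← this]
    exact Finset.sum_congr rfl fun n hn => by rw [hBeval n hn]
  obtain ⟨S, hS⟩ := hdvd
  -- map over to AddMonoidAlgebra via aeval at z = single 1 1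
  set z : AddMonoidAlgebra ℂ ℤ := AddMonoidAlgebra.single (1 : ℤ) 1 with hz
  set c' : AddMonoidAlgebra ℂ ℤ := AddMonoidAlgebra.ofCoeff c with hc'
  have hAP : Polynomial.aeval z P = AddMonoidAlgebra.single (N : ℤ) 1 * c' := by
    have hterm : ∀ n ∈ c.support, Polynomial.aeval z (C (c n) * X ^ (n + N).toNat)
        = AddMonoidAlgebra.single (n + (N : ℤ)) (c n) := by
      intro n hn
      rw [map_mul, Polynomial.aeval_C, map_pow, Polynomial.aeval_X]
      rw [hz, AddMonoidAlgebra.single_pow, one_pow]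
      have he : ((n + N).toNat : ℕ) • (1 : ℤ) = n + N := by
        rw [nsmul_eq_mul, mul_one, Int.toNat_of_nonneg (hsupp n hn)]
      rw [he]
      have halg : algebraMap ℂ (AddMonoidAlgebra ℂ ℤ) (c n)
          = AddMonoidAlgebra.single (0 : ℤ) (c n) := by
        rw [AddMonoidAlgebra.coe_algebraMap]; rfl
      rw [halg, AddMonoidAlgebra.single_mul_single, zero_add, mul_one]
    have hL : Polynomial.aeval z P = ∑ n ∈ c.support, AddMonoidAlgebra.single (n + (N:ℤ)) (c n) := by
      rw [hP, Finsupp.sum, map_sum]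
      exact Finset.sum_congr rfl hterm
    have hR : AddMonoidAlgebra.single ((N:ℤ)) (1:ℂ) * c'
        = ∑ n ∈ c.support, AddMonoidAlgebra.single (n + (N:ℤ)) (c n) := by
      conv_lhs => rw [hc', ← Finsupp.sum_single c, Finsupp.sum, AddMonoidAlgebra.ofCoeff_sum]
      rw [Finset.mul_sum]
      refine Finset.sum_congr rfl fun n _ => ?_
      rw [AddMonoidAlgebra.ofCoeff_single, AddMonoidAlgebra.single_mul_single, one_mul, add_comm]
    rw [hL, hR]
  have h1 : AddMonoidAlgebra.single ((N:ℤ)) (1:ℂ) * c' = (z - 1) ^ m * Polynomial.aeval z S := by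
    rw [← hAP, hS, map_mul, map_pow, map_sub, Polynomial.aeval_X, Polynomial.C_1, map_one]
  have h2 : (z - 1 : AddMonoidAlgebra ℂ ℤ) ^ m = (-1) ^ m * Dz ^ m := by
    rw [show (z - 1 : AddMonoidAlgebra ℂ ℤ) = -Dz by rw [Dz, hz, neg_sub], neg_pow]
  refine ⟨AddMonoidAlgebra.single (-(N:ℤ)) 1 * ((-1) ^ m * Polynomial.aeval z S), ?_⟩
  refine congrArg AddMonoidAlgebra.coeff (?_ : c' = _)
  calc c' = (AddMonoidAlgebra.single (-(N:ℤ)) (1:ℂ) * AddMonoidAlgebra.single ((N:ℤ)) 1) * c' := by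
        rw [AddMonoidAlgebra.single_mul_single, neg_add_cancel, one_mul,
          ← AddMonoidAlgebra.one_def, one_mul]
    _ = AddMonoidAlgebra.single (-(N:ℤ)) (1:ℂ) * (AddMonoidAlgebra.single ((N:ℤ)) 1 * c') :=
        mul_assoc _ _ _
    _ = AddMonoidAlgebra.single (-(N:ℤ)) (1:ℂ) * ((-1) ^ m * Dz ^ m * Polynomial.aeval z S) := by
        rw [h1, h2]
    _ = AddMonoidAlgebra.single (-(N:ℤ)) 1 * ((-1) ^ m * Polynomial.aeval z S) * Dz ^ m := by
        ring

lemma cosetSym_eq_lc (v : ℤ →₀ ℂ) (γ d : ℤ) (ξ : ℝ) :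
    cosetSym v γ d ξ = Finsupp.linearCombination ℂ
      (fun j : ℤ => if d ∣ (j - γ) then
        Complex.exp (-Complex.I * (((j - γ) / d : ℤ) : ℂ) * (ξ : ℂ)) else 0) v := by
  rw [cosetSym, Finsupp.linearCombination_apply, Finsupp.sum]
  refine Finset.sum_congr rfl fun j _ => ?_
  split_ifs with h <;> simp

lemma cosetSym_single (n : ℤ) (a : ℂ) (γ d : ℤ) (ξ : ℝ) :
    cosetSym (Finsupp.single n a) γ d ξ = if d ∣ (n - γ) then
      a * Complex.exp (-Complex.I * (((n - γ) / d : ℤ) : ℂ) * (ξ : ℂ)) else 0 := by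
  rw [cosetSym_eq_lc, Finsupp.linearCombination_single]
  split_ifs with h <;> simp

def resFin (r : ℕ) (hr : 0 < r) (a : ℤ) : Fin r :=
  ⟨(a % (r : ℤ)).toNat, by
    have h1 : 0 ≤ a % (r : ℤ) := Int.emod_nonneg a (by exact_mod_cast hr.ne')
    have h2 : a % (r : ℤ) < r := Int.emod_lt_of_pos a (by exact_mod_cast hr)
    omega⟩

lemma resFin_coe (r : ℕ) (hr : 0 < r) (a : ℤ) :
    (((resFin r hr a : Fin r) : ℕ) : ℤ) = a % (r : ℤ) := by
  have h1 : 0 ≤ a % (r : ℤ) := Int.emod_nonneg a (by exact_mod_cast hr.ne')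
  simp only [resFin]
  omega

lemma resFin_dvd (r : ℕ) (hr : 0 < r) (a : ℤ) :
    (r : ℤ) ∣ a - ((resFin r hr a : ℕ) : ℤ) := by
  rw [resFin_coe, Int.emod_def]
  exact ⟨a / r, by ring⟩

lemma resFin_iff (r : ℕ) (hr : 0 < r) (a : ℤ) (l : Fin r) :
    (r : ℤ) ∣ a - ((l : ℕ) : ℤ) ↔ l = resFin r hr a := by
  constructor
  · rintro ⟨t, ht⟩
    have ha : a = ((l : ℕ) : ℤ) + (r : ℤ) * t := by omega
    have h2 : a % (r : ℤ) = ((l : ℕ) : ℤ) % (r : ℤ) := by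
      rw [ha, Int.add_mul_emod_self_left]
    have h3 : ((l : ℕ) : ℤ) % (r : ℤ) = ((l : ℕ) : ℤ) :=
      Int.emod_eq_of_lt (by positivity) (by exact_mod_cast l.isLt)
    have := resFin_coe r hr a
    apply Fin.ext
    omega
  · rintro rfl
    exact resFin_dvd r hr a

lemma sum_resFin {M : Type*} [AddCommMonoid M] (r : ℕ) (hr : 0 < r) (a : ℤ)
    (f : Fin r → M) :
    (∑ l : Fin r, if (r : ℤ) ∣ a - ((l : ℕ) : ℤ) then f l else 0) = f (resFin r hr a) := by
  rw [Finset.sum_eq_single (resFin r hr a)]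
  · rw [if_pos (resFin_dvd r hr a)]
  · intro l _ hne
    exact if_neg fun hd => hne ((resFin_iff r hr a l).mp hd)
  · intro h
    exact absurd (Finset.mem_univ _) h

lemma cosetSym_mul (r : ℕ) (hr : 0 < r) (u v : ℤ →₀ ℂ) (k : Fin r) (ξ : ℝ) :
    cosetSym (AddMonoidAlgebra.ofCoeff u * AddMonoidAlgebra.ofCoeff v).coeff ((k : ℕ) : ℤ) (r : ℤ) ξ
      = ∑ l : Fin r, cosetSym u ((l : ℕ) : ℤ) (r : ℤ) ξ *
          cosetSym v (((k : ℕ) : ℤ) - ((l : ℕ) : ℤ)) (r : ℤ) ξ := by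
  have hrne : (r : ℤ) ≠ 0 := by exact_mod_cast hr.ne'
  have hL : cosetSym (AddMonoidAlgebra.ofCoeff u * AddMonoidAlgebra.ofCoeff v).coeff ((k : ℕ) : ℤ) (r : ℤ) ξ
      = ∑ a ∈ u.support, ∑ b ∈ v.support,
        (if (r : ℤ) ∣ a + b - ((k : ℕ) : ℤ) then (u a * v b) *
          Complex.exp (-Complex.I * (((a + b - ((k : ℕ) : ℤ)) / (r : ℤ) : ℤ) : ℂ) * (ξ : ℂ))
        else 0) := by
    rw [cosetSym_eq_lc, AddMonoidAlgebra.mul_def, AddMonoidAlgebra.coeff_finsuppSum, Finsupp.sum, map_sum]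
    refine Finset.sum_congr rfl fun a _ => ?_
    rw [AddMonoidAlgebra.coeff_finsuppSum, Finsupp.sum, map_sum]
    refine Finset.sum_congr rfl fun b _ => ?_
    rw [AddMonoidAlgebra.coeff_single, Finsupp.linearCombination_single]
    split_ifs with h <;> simp
  rw [hL]
  have hR : ∀ l : Fin r, cosetSym u ((l : ℕ) : ℤ) (r : ℤ) ξ *
      cosetSym v (((k : ℕ) : ℤ) - ((l : ℕ) : ℤ)) (r : ℤ) ξ
      = ∑ a ∈ u.support, ∑ b ∈ v.support,
        ((if (r : ℤ) ∣ a - ((l : ℕ) : ℤ) then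
            u a * Complex.exp (-Complex.I * (((a - ((l : ℕ) : ℤ)) / (r : ℤ) : ℤ) : ℂ) * (ξ : ℂ))
          else 0) *
         (if (r : ℤ) ∣ b - (((k : ℕ) : ℤ) - ((l : ℕ) : ℤ)) then
            v b * Complex.exp (-Complex.I *
              (((b - (((k : ℕ) : ℤ) - ((l : ℕ) : ℤ))) / (r : ℤ) : ℤ) : ℂ) * (ξ : ℂ))
          else 0)) := by
    intro l
    simp only [cosetSym]
    exact Finset.sum_mul_sum _ _ _ _
  have hpoint : ∀ a ∈ u.support, ∀ b ∈ v.support,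
      (if (r : ℤ) ∣ a + b - ((k : ℕ) : ℤ) then (u a * v b) *
          Complex.exp (-Complex.I * (((a + b - ((k : ℕ) : ℤ)) / (r : ℤ) : ℤ) : ℂ) * (ξ : ℂ))
        else 0)
      = ∑ l : Fin r,
        ((if (r : ℤ) ∣ a - ((l : ℕ) : ℤ) then
            u a * Complex.exp (-Complex.I * (((a - ((l : ℕ) : ℤ)) / (r : ℤ) : ℤ) : ℂ) * (ξ : ℂ))
          else 0) *
         (if (r : ℤ) ∣ b - (((k : ℕ) : ℤ) - ((l : ℕ) : ℤ)) then
            v b * Complex.exp (-Complex.I *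
              (((b - (((k : ℕ) : ℤ) - ((l : ℕ) : ℤ))) / (r : ℤ) : ℤ) : ℂ) * (ξ : ℂ))
          else 0)) := by
    intro a _ b _
    have hcollapse : ∑ l : Fin r,
        ((if (r : ℤ) ∣ a - ((l : ℕ) : ℤ) then
            u a * Complex.exp (-Complex.I * (((a - ((l : ℕ) : ℤ)) / (r : ℤ) : ℤ) : ℂ) * (ξ : ℂ))
          else 0) *
         (if (r : ℤ) ∣ b - (((k : ℕ) : ℤ) - ((l : ℕ) : ℤ)) then
            v b * Complex.exp (-Complex.I *
              (((b - (((k : ℕ) : ℤ) - ((l : ℕ) : ℤ))) / (r : ℤ) : ℤ) : ℂ) * (ξ : ℂ))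
          else 0))
        = (u a * Complex.exp (-Complex.I *
              (((a - (((resFin r hr a) : ℕ) : ℤ)) / (r : ℤ) : ℤ) : ℂ) * (ξ : ℂ))) *
          (if (r : ℤ) ∣ b - (((k : ℕ) : ℤ) - (((resFin r hr a) : ℕ) : ℤ)) then
            v b * Complex.exp (-Complex.I *
              (((b - (((k : ℕ) : ℤ) - (((resFin r hr a) : ℕ) : ℤ))) / (r : ℤ) : ℤ) : ℂ) * (ξ : ℂ))
          else 0) := by
      calc _ = ∑ l : Fin r, (if (r : ℤ) ∣ a - ((l : ℕ) : ℤ) then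
          (fun l' : Fin r =>
            (u a * Complex.exp (-Complex.I *
                (((a - ((l' : ℕ) : ℤ)) / (r : ℤ) : ℤ) : ℂ) * (ξ : ℂ))) *
            (if (r : ℤ) ∣ b - (((k : ℕ) : ℤ) - ((l' : ℕ) : ℤ)) then
              v b * Complex.exp (-Complex.I *
                (((b - (((k : ℕ) : ℤ) - ((l' : ℕ) : ℤ))) / (r : ℤ) : ℤ) : ℂ) * (ξ : ℂ))
            else 0)) l else 0) :=
            Finset.sum_congr rfl fun l _ => by rw [ite_mul, zero_mul]
        _ = _ := sum_resFin r hr a _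
    rw [hcollapse]
    set l₀ : Fin r := resFin r hr a with hl₀
    obtain ⟨x0, hx0⟩ := resFin_dvd r hr a
    rw [← hl₀] at hx0
    by_cases h : (r : ℤ) ∣ a + b - ((k : ℕ) : ℤ)
    · obtain ⟨w0, hw0⟩ := h
      have hy : b - (((k : ℕ) : ℤ) - ((l₀ : ℕ) : ℤ)) = (r : ℤ) * (w0 - x0) := by
        push_cast at hx0 hw0 ⊢
        linarith [hx0, hw0]
      rw [if_pos ⟨w0, hw0⟩, if_pos ⟨w0 - x0, hy⟩]
      have e1 : (a - ((l₀ : ℕ) : ℤ)) / (r : ℤ) = x0 := by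
        rw [hx0, Int.mul_ediv_cancel_left _ hrne]
      have e2 : (b - (((k : ℕ) : ℤ) - ((l₀ : ℕ) : ℤ))) / (r : ℤ) = w0 - x0 := by
        rw [hy, Int.mul_ediv_cancel_left _ hrne]
      have e3 : (a + b - ((k : ℕ) : ℤ)) / (r : ℤ) = w0 := by
        rw [hw0, Int.mul_ediv_cancel_left _ hrne]
      rw [e1, e2, e3]
      rw [show (-Complex.I * ((w0 : ℤ) : ℂ) * (ξ : ℂ)) =
        (-Complex.I * ((x0 : ℤ) : ℂ) * (ξ : ℂ)) + (-Complex.I * (((w0 - x0 : ℤ) : ℤ) : ℂ) * (ξ : ℂ))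
        from by push_cast; ring, Complex.exp_add]
      ring
    · rw [if_neg h, if_neg, mul_zero]
      intro hd
      apply h
      have heq : a + b - ((k : ℕ) : ℤ)
          = (a - ((l₀ : ℕ) : ℤ)) + (b - (((k : ℕ) : ℤ) - ((l₀ : ℕ) : ℤ))) := by ring
      rw [heq]
      exact dvd_add ⟨x0, hx0⟩ hd
  calc (∑ a ∈ u.support, ∑ b ∈ v.support,
        if (r : ℤ) ∣ a + b - ((k : ℕ) : ℤ) then (u a * v b) *
          Complex.exp (-Complex.I * (((a + b - ((k : ℕ) : ℤ)) / (r : ℤ) : ℤ) : ℂ) * (ξ : ℂ))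
        else 0)
      = ∑ a ∈ u.support, ∑ b ∈ v.support, ∑ l : Fin r,
        ((if (r : ℤ) ∣ a - ((l : ℕ) : ℤ) then
            u a * Complex.exp (-Complex.I * (((a - ((l : ℕ) : ℤ)) / (r : ℤ) : ℤ) : ℂ) * (ξ : ℂ))
          else 0) *
         (if (r : ℤ) ∣ b - (((k : ℕ) : ℤ) - ((l : ℕ) : ℤ)) then
            v b * Complex.exp (-Complex.I *
              (((b - (((k : ℕ) : ℤ) - ((l : ℕ) : ℤ))) / (r : ℤ) : ℤ) : ℂ) * (ξ : ℂ))
          else 0)) := by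
        exact Finset.sum_congr rfl fun a ha => Finset.sum_congr rfl fun b hb => hpoint a ha b hb
    _ = ∑ l : Fin r, ∑ a ∈ u.support, ∑ b ∈ v.support,
        ((if (r : ℤ) ∣ a - ((l : ℕ) : ℤ) then
            u a * Complex.exp (-Complex.I * (((a - ((l : ℕ) : ℤ)) / (r : ℤ) : ℤ) : ℂ) * (ξ : ℂ))
          else 0) *
         (if (r : ℤ) ∣ b - (((k : ℕ) : ℤ) - ((l : ℕ) : ℤ)) then
            v b * Complex.exp (-Complex.I *
              (((b - (((k : ℕ) : ℤ) - ((l : ℕ) : ℤ))) / (r : ℤ) : ℤ) : ℂ) * (ξ : ℂ))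
          else 0)) := by
        rw [show (∑ a ∈ u.support, ∑ b ∈ v.support, ∑ l : Fin r,
          ((if (r : ℤ) ∣ a - ((l : ℕ) : ℤ) then
              u a * Complex.exp (-Complex.I * (((a - ((l : ℕ) : ℤ)) / (r : ℤ) : ℤ) : ℂ) * (ξ : ℂ))
            else 0) *
           (if (r : ℤ) ∣ b - (((k : ℕ) : ℤ) - ((l : ℕ) : ℤ)) then
              v b * Complex.exp (-Complex.I *
                (((b - (((k : ℕ) : ℤ) - ((l : ℕ) : ℤ))) / (r : ℤ) : ℤ) : ℂ) * (ξ : ℂ))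
            else 0)))
          = ∑ a ∈ u.support, ∑ l : Fin r, ∑ b ∈ v.support,
          ((if (r : ℤ) ∣ a - ((l : ℕ) : ℤ) then
              u a * Complex.exp (-Complex.I * (((a - ((l : ℕ) : ℤ)) / (r : ℤ) : ℤ) : ℂ) * (ξ : ℂ))
            else 0) *
           (if (r : ℤ) ∣ b - (((k : ℕ) : ℤ) - ((l : ℕ) : ℤ)) then
              v b * Complex.exp (-Complex.I *
                (((b - (((k : ℕ) : ℤ) - ((l : ℕ) : ℤ))) / (r : ℤ) : ℤ) : ℂ) * (ξ : ℂ))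
            else 0))
          from Finset.sum_congr rfl fun a _ => Finset.sum_comm]
        exact Finset.sum_comm
    _ = ∑ l : Fin r, cosetSym u ((l : ℕ) : ℤ) (r : ℤ) ξ *
          cosetSym v (((k : ℕ) : ℤ) - ((l : ℕ) : ℤ)) (r : ℤ) ξ :=
        Finset.sum_congr rfl fun l _ => (hR l).symm

lemma hasDerivAt_cexp_mul (c : ℂ) (x : ℝ) :
    HasDerivAt (fun ξ : ℝ => Complex.exp (c * (ξ : ℂ))) (c * Complex.exp (c * (x : ℂ))) x := by
  have h : HasDerivAt (fun w : ℂ => Complex.exp (c * w)) (c * Complex.exp (c * (x : ℂ))) (x : ℂ) := by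
    simpa [mul_comm, mul_one] using ((hasDerivAt_id ((x : ℝ) : ℂ)).const_mul c).cexp
  exact h.comp_ofReal

lemma iteratedDeriv_sum_cexp {ι : Type*} (S : Finset ι) (c aa : ι → ℂ) (t : ℕ) :
    iteratedDeriv t (fun ξ : ℝ => ∑ j ∈ S, c j * Complex.exp (aa j * (ξ : ℂ)))
      = fun ξ : ℝ => ∑ j ∈ S, c j * (aa j) ^ t * Complex.exp (aa j * (ξ : ℂ)) := by
  induction t with
  | zero => simp
  | succ t ih =>
    rw [iteratedDeriv_succ, ih]
    funext x
    have hd : HasDerivAt (fun ξ : ℝ => ∑ j ∈ S, c j * (aa j) ^ t * Complex.exp (aa j * (ξ : ℂ)))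
        (∑ j ∈ S, c j * (aa j) ^ (t+1) * Complex.exp (aa j * (x : ℂ))) x := by
      have := HasDerivAt.fun_sum (fun j (_ : j ∈ S) =>
        (hasDerivAt_cexp_mul (aa j) x).const_mul (c j * (aa j) ^ t))
      exact this.congr_deriv (Finset.sum_congr rfl fun j _ => by ring)
    exact hd.deriv

lemma iteratedDeriv_sum_cexp_zero {ι : Type*} (S : Finset ι) (c aa : ι → ℂ) (t : ℕ) :
    iteratedDeriv t (fun ξ : ℝ => ∑ j ∈ S, c j * Complex.exp (aa j * (ξ : ℂ))) 0
      = ∑ j ∈ S, c j * (aa j) ^ t := by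
  rw [iteratedDeriv_sum_cexp]
  simp

lemma ups_eq (r : ℕ) (hr : 0 < r) (w : ℤ →₀ ℂ) (ξ : ℝ) :
    (∑ k : Fin r, Complex.exp (Complex.I * ((k : ℕ) : ℂ) * (ξ : ℂ) / (r : ℂ)) *
      (starRingEnd ℂ) (cosetSym w ((k : ℕ) : ℤ) (r : ℤ) ξ))
    = ∑ j ∈ w.support, (starRingEnd ℂ) (w j) *
        Complex.exp ((Complex.I * (j : ℂ) / (r : ℂ)) * (ξ : ℂ)) := by
  have hrC : (r : ℂ) ≠ 0 := by exact_mod_cast hr.ne'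
  have hterm : ∀ k : Fin r, Complex.exp (Complex.I * ((k : ℕ) : ℂ) * (ξ : ℂ) / (r : ℂ)) *
      (starRingEnd ℂ) (cosetSym w ((k : ℕ) : ℤ) (r : ℤ) ξ)
      = ∑ j ∈ w.support, (if (r : ℤ) ∣ j - ((k : ℕ) : ℤ) then
          (starRingEnd ℂ) (w j) * (Complex.exp (Complex.I * ((k : ℕ) : ℂ) * (ξ : ℂ) / (r : ℂ)) *
            Complex.exp (Complex.I * (((j - ((k : ℕ) : ℤ)) / (r : ℤ) : ℤ) : ℂ) * (ξ : ℂ)))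
        else 0) := by
    intro k
    rw [cosetSym, map_sum, Finset.mul_sum]
    refine Finset.sum_congr rfl fun j _ => ?_
    rw [apply_ite (starRingEnd ℂ), map_zero, map_mul, mul_ite, mul_zero]
    split_ifs with h
    · have hconj : (starRingEnd ℂ) (Complex.exp
          (-Complex.I * (((j - ((k : ℕ) : ℤ)) / (r : ℤ) : ℤ) : ℂ) * (ξ : ℂ)))
          = Complex.exp (Complex.I * (((j - ((k : ℕ) : ℤ)) / (r : ℤ) : ℤ) : ℂ) * (ξ : ℂ)) := by
        rw [← Complex.exp_conj]
        congr 1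
        simp [map_mul, Complex.conj_ofReal]
      rw [hconj]
      ring
    · rfl
  simp only [hterm]
  rw [Finset.sum_comm]
  refine Finset.sum_congr rfl fun j _ => ?_
  have hcol := sum_resFin r hr j (fun k : Fin r =>
      (starRingEnd ℂ) (w j) * (Complex.exp (Complex.I * ((k : ℕ) : ℂ) * (ξ : ℂ) / (r : ℂ)) *
        Complex.exp (Complex.I * (((j - ((k : ℕ) : ℤ)) / (r : ℤ) : ℤ) : ℂ) * (ξ : ℂ))))
  rw [hcol]
  obtain ⟨x0, hx0⟩ := resFin_dvd r hr j
  set k₀ : Fin r := resFin r hr j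
  have e1 : (j - ((k₀ : ℕ) : ℤ)) / (r : ℤ) = x0 := by
    rw [hx0, Int.mul_ediv_cancel_left _ (by exact_mod_cast hr.ne')]
  rw [e1, ← Complex.exp_add]
  congr 1
  have hj : (j : ℂ) = ((k₀ : ℕ) : ℂ) + (r : ℂ) * (x0 : ℂ) := by
    have : (j : ℤ) = ((k₀ : ℕ) : ℤ) + (r : ℤ) * x0 := by omega
    exact_mod_cast congrArg (fun z : ℤ => (z : ℂ)) this
  rw [hj]
  field_simp

lemma master (r : ℕ) (hr : 0 < r) (m : ℕ) (w : ℤ →₀ ℂ) (F : ℝ → ℂ)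
    (hF : ∀ ξ : ℝ, F ξ = ∑ k : Fin r,
      Complex.exp (Complex.I * ((k : ℕ) : ℂ) * (ξ : ℂ) / (r : ℂ)) *
        (starRingEnd ℂ) (cosetSym w ((k : ℕ) : ℤ) (r : ℤ) ξ)) :
    (∀ j < m, iteratedDeriv j F 0 = 0) ↔ (∀ j < m, pmom (X ^ j) w = 0) := by
  have hrC : (r : ℂ) ≠ 0 := by exact_mod_cast hr.ne'
  have hFeq : F = fun ξ : ℝ => ∑ j ∈ w.support,
      (starRingEnd ℂ) (w j) * Complex.exp ((Complex.I * (j : ℂ) / (r : ℂ)) * (ξ : ℂ)) := by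
    funext ξ
    rw [hF ξ, ups_eq r hr w ξ]
  have hval : ∀ t : ℕ, iteratedDeriv t F 0
      = (Complex.I / (r : ℂ)) ^ t * (starRingEnd ℂ) (pmom (X ^ t) w) := by
    intro t
    rw [hFeq, iteratedDeriv_sum_cexp_zero w.support
      (fun j => (starRingEnd ℂ) (w j)) (fun j => Complex.I * (j : ℂ) / (r : ℂ)) t]
    rw [pmom_apply, map_sum, Finset.mul_sum]
    refine Finset.sum_congr rfl fun j _ => ?_
    rw [map_mul, eval_pow, eval_X, map_pow, map_intCast]
    ring
  constructor
  · intro h t ht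
    have := h t ht
    rw [hval t] at this
    rcases mul_eq_zero.mp this with h1 | h2
    · exact absurd h1 (pow_ne_zero t (div_ne_zero Complex.I_ne_zero hrC))
    · have := congrArg (starRingEnd ℂ) h2
      rwa [Complex.conj_conj, map_zero] at this
  · intro h t ht
    rw [hval t, h t ht, map_zero, mul_zero]

lemma trigSymM_apply {α β : Type*} (U : ℤ →₀ Matrix α β ℂ) (ξ : ℝ) (i : α) (k : β) :
    trigSymM U ξ i k = ∑ n ∈ U.support, Complex.exp (-Complex.I * (n : ℂ) * (ξ : ℂ)) * U n i k := by
  rw [trigSymM, Finsupp.sum, Matrix.sum_apply]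
  exact Finset.sum_congr rfl fun n _ => rfl

lemma trig_eq_coset {s r : ℕ} (hr : 0 < r) (b : ℤ →₀ Matrix (Fin s) (Fin r) ℂ)
    (i : Fin s) (k : Fin r) (ξ : ℝ) :
    cosetSym (∑ x ∈ ((Finset.univ : Finset (Fin r)) ×ˢ b.support),
        Finsupp.single (((x.1 : ℕ) : ℤ) + (r : ℤ) * x.2) (b x.2 i x.1)) ((k : ℕ) : ℤ) (r : ℤ) ξ
      = trigSymM b ξ i k := by
  have hrne : (r : ℤ) ≠ 0 := by exact_mod_cast hr.ne'
  have hsum : cosetSym (∑ x ∈ ((Finset.univ : Finset (Fin r)) ×ˢ b.support),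
        Finsupp.single (((x.1 : ℕ) : ℤ) + (r : ℤ) * x.2) (b x.2 i x.1)) ((k : ℕ) : ℤ) (r : ℤ) ξ
      = ∑ x ∈ ((Finset.univ : Finset (Fin r)) ×ˢ b.support),
          (if (r : ℤ) ∣ (((x.1 : ℕ) : ℤ) + (r : ℤ) * x.2) - ((k : ℕ) : ℤ) then
            b x.2 i x.1 * Complex.exp (-Complex.I *
              ((((((x.1 : ℕ) : ℤ) + (r : ℤ) * x.2) - ((k : ℕ) : ℤ)) / (r : ℤ) : ℤ) : ℂ) * (ξ : ℂ))
          else 0) := by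
    rw [cosetSym_eq_lc, map_sum]
    refine Finset.sum_congr rfl fun x _ => ?_
    rw [← cosetSym_eq_lc, cosetSym_single]
  rw [hsum, Finset.sum_product, Finset.sum_comm, trigSymM_apply]
  refine Finset.sum_congr rfl fun n _ => ?_
  have hcond : ∀ k' : Fin r, ((r : ℤ) ∣ (((k' : ℕ) : ℤ) + (r : ℤ) * n) - ((k : ℕ) : ℤ))
      ↔ ((r : ℤ) ∣ (((k : ℕ) : ℤ) - (r : ℤ) * n) - ((k' : ℕ) : ℤ)) := by
    intro k'
    constructor
    · rintro ⟨t, ht⟩; exact ⟨-t, by linarith⟩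
    · rintro ⟨t, ht⟩; exact ⟨-t, by linarith⟩
  have hstep : (∑ k' : Fin r,
      (if (r : ℤ) ∣ (((k' : ℕ) : ℤ) + (r : ℤ) * n) - ((k : ℕ) : ℤ) then
        b n i k' * Complex.exp (-Complex.I *
          ((((((k' : ℕ) : ℤ) + (r : ℤ) * n) - ((k : ℕ) : ℤ)) / (r : ℤ) : ℤ) : ℂ) * (ξ : ℂ))
      else 0))
      = ∑ k' : Fin r,
        (if (r : ℤ) ∣ (((k : ℕ) : ℤ) - (r : ℤ) * n) - ((k' : ℕ) : ℤ) then
          (fun k'' : Fin r => b n i k'' * Complex.exp (-Complex.I *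
            ((((((k'' : ℕ) : ℤ) + (r : ℤ) * n) - ((k : ℕ) : ℤ)) / (r : ℤ) : ℤ) : ℂ) * (ξ : ℂ))) k'
        else 0) := by
    refine Finset.sum_congr rfl fun k' _ => ?_
    rw [if_congr (hcond k') rfl rfl]
  rw [hstep, sum_resFin r hr]
  have hres : resFin r hr (((k : ℕ) : ℤ) - (r : ℤ) * n) = k := by
    refine ((resFin_iff r hr _ k).mp ⟨-n, by ring⟩).symm
  rw [hres]
  have hdiv : ((((k : ℕ) : ℤ) + (r : ℤ) * n) - ((k : ℕ) : ℤ)) / (r : ℤ) = n := by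
    rw [show (((k : ℕ) : ℤ) + (r : ℤ) * n) - ((k : ℕ) : ℤ) = (r : ℤ) * n by ring,
      Int.mul_ediv_cancel_left _ hrne]
  simp only [hdiv]
  ring


lemma pmom_nabla (m : ℕ) (p : ℂ[X]) (hp : p.natDegree < m) : pmom p (nablaDelta m) = 0 := by
  rw [nablaDelta_eq]
  exact pmom_D_pow m p hp

lemma pmom_mul_nabla (m : ℕ) (u : AddMonoidAlgebra ℂ ℤ) (j : ℕ) (hj : j < m) :
    pmom (X ^ j) (u * AddMonoidAlgebra.ofCoeff (nablaDelta m)).coeff = 0 := by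
  rw [pmom_mul, Finsupp.sum]
  refine Finset.sum_eq_zero fun a _ => ?_
  rw [pmom_nabla m _ (by
    rw [natDegree_comp, natDegree_X_pow, natDegree_X_add_C, mul_one]; exact hj), mul_zero]

end BVM

end

/-- Lemma 5.1: a filter `b ∈ (l_0(ℤ))^{s×r}` has `m` balanced vanishing moments, i.e.
`Υ̂(ξ) b̂(ξ)* = O(|ξ|^m)` as `ξ → 0` with `Υ̂(ξ) = [1, e^{iξ/r}, …, e^{i(r-1)ξ/r}]`,
if and only if `b̂(ξ) = [q̂^{[0;r]}(ξ), …, q̂^{[r-1;r]}(ξ)] E_{∇^m δ; r}(ξ)` for some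
`q ∈ (l_0(ℤ))^{s×1}`. -/
theorem balanced_vanishing_moments_iff (r : ℕ) (hr : 2 ≤ r) (s : ℕ) (hs : 1 ≤ s)
    (m : ℕ) (hm : 1 ≤ m) (b : ℤ →₀ Matrix (Fin s) (Fin r) ℂ) :
    (∀ i : Fin s, ∀ j < m, iteratedDeriv j
        (fun ξ : ℝ => ∑ k : Fin r,
          Complex.exp (Complex.I * ((k : ℕ) : ℂ) * (ξ : ℂ) / (r : ℂ)) *
            (starRingEnd ℂ) (trigSymM b ξ i k)) 0 = 0) ↔
    (∃ q : Fin s → ℤ →₀ ℂ, ∀ ξ : ℝ,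
      trigSymM b ξ = (Matrix.of fun (i : Fin s) (k : Fin r) =>
          cosetSym (q i) ((k : ℕ) : ℤ) (r : ℤ) ξ) *
        (Matrix.of fun l k : Fin r =>
          cosetSym (nablaDelta m) (((k : ℕ) : ℤ) - ((l : ℕ) : ℤ)) (r : ℤ) ξ)) := by
  classical
  have hr0 : 0 < r := by omega
  set d : Fin s → (ℤ →₀ ℂ) := fun i => ∑ x ∈ ((Finset.univ : Finset (Fin r)) ×ˢ b.support),
    Finsupp.single (((x.1 : ℕ) : ℤ) + (r : ℤ) * x.2) (b x.2 i x.1) with hd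
  have key : ∀ (i : Fin s) (k : Fin r) (ξ : ℝ),
      cosetSym (d i) ((k : ℕ) : ℤ) (r : ℤ) ξ = trigSymM b ξ i k := fun i k ξ =>
    BVM.trig_eq_coset hr0 b i k ξ
  constructor
  · intro h
    have hmom : ∀ i : Fin s, ∀ j < m, BVM.pmom (Polynomial.X ^ j) (d i) = 0 := by
      intro i
      refine (BVM.master r hr0 m (d i) _ ?_).mp (h i)
      intro ξ
      refine Finset.sum_congr rfl fun k _ => ?_
      rw [key i k ξ]
    have hex : ∀ i : Fin s, ∃ qq : AddMonoidAlgebra ℂ ℤ, d i = (qq * BVM.Dz ^ m).coeff :=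
      fun i => BVM.exists_div m (d i) (hmom i)
    choose q hq using hex
    refine ⟨fun i => (q i).coeff, fun ξ => ?_⟩
    ext i k
    rw [Matrix.mul_apply]
    simp only [Matrix.of_apply]
    rw [← key i k ξ, hq i, BVM.nablaDelta_eq m]
    exact BVM.cosetSym_mul r hr0 (q i).coeff (BVM.Dz ^ m).coeff k ξ
  · rintro ⟨q, hq⟩ i
    set w : ℤ →₀ ℂ := (AddMonoidAlgebra.ofCoeff (q i) *
      AddMonoidAlgebra.ofCoeff (nablaDelta m)).coeff with hw
    refine (BVM.master r hr0 m w _ ?_).mpr ?_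
    · intro ξ
      refine Finset.sum_congr rfl fun k _ => ?_
      have hentry : trigSymM b ξ i k = cosetSym w ((k : ℕ) : ℤ) (r : ℤ) ξ := by
        have h1 := congrFun (congrFun (hq ξ) i) k
        rw [Matrix.mul_apply] at h1
        simp only [Matrix.of_apply] at h1
        rw [h1, hw]
        exact (BVM.cosetSym_mul r hr0 (q i) (nablaDelta m) k ξ).symm
      rw [hentry]
    · intro j hj
      rw [hw]
      exact BVM.pmom_mul_nabla m (AddMonoidAlgebra.ofCoeff (q i)) j hj
end
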